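/- Let P and Q be POVMs on ℂ^d with the same finite outcome set. The following are equivalent: (1) P ≻ Q, i.e. there is a finite Kraus family (A_k) with ∑_k A_kᴴ A_k = 1 and ∑_k A_kᴴ P_e A_k = Q_e for every outcome e; (2) there exists an informationally complete POVM M on ℂ^d such that Rng(Q ⊗ M) ⊆ Rng(P ⊗ M); (3) for every POVM M on ℂ^d, Rng(Q ⊗ M) ⊆ Rng(P ⊗ M). Here P ⊗ M denotes the POVM on ℂ^d ⊗ ℂ^d ≅ ℂ^{d²} with outcome set E(P)×E(M) whose element at (e,f) is the Kronecker product P_e ⊗ M_f. -/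

import Mathlib

open Matrix BigOperators Kronecker
open scoped ComplexOrder

/-- A POVM on the Hilbert space `ℂ^m` (for an arbitrary finite index type `m`)
with finite outcome set `E`. -/
def IsPOVM {m : Type} [Fintype m] [DecidableEq m] {E : Type} [Fintype E]
    (P : E → Matrix m m ℂ) : Prop :=
  (∀ e, (P e).PosSemidef) ∧ ∑ e, P e = 1

/-- The range of a POVM: all vectors of outcome probabilities `(Tr(ρ P_e))_e` as `ρ`
ranges over density matrices. -/
def Rng {m : Type} [Fintype m] {E : Type} [Fintype E]
    (P : E → Matrix m m ℂ) : Set (E → ℝ) :=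
  {p | ∃ ρ : Matrix m m ℂ, ρ.PosSemidef ∧ ρ.trace = 1 ∧
    ∀ e, (ρ * P e).trace = (p e : ℂ)}

/-- A POVM is informationally complete if its elements span the whole matrix algebra. -/
def InfoComplete {m : Type} [Fintype m] {E : Type} [Fintype E]
    (P : E → Matrix m m ℂ) : Prop :=
  Submodule.span ℂ (Set.range P) = ⊤

/-- `Cleaner P Q` (`P ≻ Q`): there is a quantum channel in the Heisenberg picture,
given by a finite Kraus family, mapping `P` to `Q`. -/
def Cleaner {d : ℕ} {E : Type} [Fintype E]
    (P Q : E → Matrix (Fin d) (Fin d) ℂ) : Prop :=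
  ∃ (n : ℕ) (A : Fin n → Matrix (Fin d) (Fin d) ℂ),
    ∑ k, (A k)ᴴ * A k = 1 ∧ ∀ e, ∑ k, (A k)ᴴ * P e * A k = Q e


section Aux
lemma kron_conjT {m n : Type} [Fintype m] [Fintype n] (A : Matrix m m ℂ) (B : Matrix n n ℂ) :
    (A ⊗ₖ B)ᴴ = Aᴴ ⊗ₖ Bᴴ := by
  ext ⟨i,j⟩ ⟨k,l⟩
  simp [conjTranspose_apply, kroneckerMap_apply]

lemma trace_mul_kron {m n : Type} [Fintype m] [Fintype n]
    (σ : Matrix (m × n) (m × n) ℂ) (A : Matrix m m ℂ) (B : Matrix n n ℂ) :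
    (σ * (A ⊗ₖ B)).trace = ∑ i, ∑ j, ∑ k, ∑ l, σ (i,j) (k,l) * A k i * B l j := by
  simp only [Matrix.trace, Matrix.diag, Matrix.mul_apply, kroneckerMap_apply,
    Fintype.sum_prod_type]
  exact Finset.sum_congr rfl fun i _ => Finset.sum_congr rfl fun j _ =>
    Finset.sum_congr rfl fun k _ => Finset.sum_congr rfl fun l _ => by ring

lemma sum_kron_right {m n ι : Type} [Fintype m] [Fintype n] (s : Finset ι)
    (f : ι → Matrix m m ℂ) (B : Matrix n n ℂ) :
    (∑ k ∈ s, f k) ⊗ₖ B = ∑ k ∈ s, (f k ⊗ₖ B) := by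
  ext ⟨i,j⟩ ⟨k,l⟩
  simp [kroneckerMap_apply, Matrix.sum_apply, Finset.sum_mul]

lemma trace_X_mul_conjT_self_eq_zero {m : Type} [Fintype m] {X : Matrix m m ℂ}
    (h : (X * Xᴴ).trace = 0) : X = 0 := by
  have h2 : (∑ i, ∑ j, (Complex.normSq (X i j) : ℂ)) = 0 := by
    rw [← h]
    simp only [Matrix.trace, Matrix.diag, Matrix.mul_apply, conjTranspose_apply,
      Complex.star_def, Complex.mul_conj]
  have h3 : (∑ i, ∑ j, Complex.normSq (X i j)) = 0 := by exact_mod_cast h2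
  ext i j
  have h4 := (Finset.sum_eq_zero_iff_of_nonneg
    (fun i _ => Finset.sum_nonneg fun j _ => Complex.normSq_nonneg _)).1 h3 i (Finset.mem_univ i)
  have h5 := (Finset.sum_eq_zero_iff_of_nonneg
    (fun j _ => Complex.normSq_nonneg _)).1 h4 j (Finset.mem_univ j)
  simpa using Complex.normSq_eq_zero.1 h5

lemma infoComplete_inj {m F : Type} [Fintype m] [DecidableEq m] [Fintype F]
    (M : F → Matrix m m ℂ) (h : Submodule.span ℂ (Set.range M) = ⊤)
    (X : Matrix m m ℂ) (hX : ∀ f, (X * M f).trace = 0) : X = 0 := by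
  set φ : Matrix m m ℂ →ₗ[ℂ] ℂ :=
    (Matrix.traceLinearMap m ℂ ℂ).comp (LinearMap.mulLeft ℂ X) with hφ
  have hker : Submodule.span ℂ (Set.range M) ≤ LinearMap.ker φ := by
    rw [Submodule.span_le]
    rintro _ ⟨f, rfl⟩
    exact hX f
  rw [h, top_le_iff] at hker
  have : φ Xᴴ = 0 := by rw [LinearMap.ker_eq_top.1 hker]; rfl
  exact trace_X_mul_conjT_self_eq_zero this

noncomputable def icc : Fin 4 → ℂ := ![0, 1, Complex.I, -1]

noncomputable def icv (d : ℕ) (x : Fin d × Fin d × Fin 4) : Fin d → ℂ :=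
  fun a => (if a = x.1 then 1 else 0) + icc x.2.2 * (if a = x.2.1 then 1 else 0)

noncomputable def icR (d : ℕ) (x : Fin d × Fin d × Fin 4) : Matrix (Fin d) (Fin d) ℂ :=
  Matrix.of fun a b => icv d x a * star (icv d x b)

lemma icR_posSemidef (d : ℕ) (x : Fin d × Fin d × Fin 4) : (icR d x).PosSemidef := by
  have : icR d x = (Matrix.of fun (_ : Fin 1) (a : Fin d) => star (icv d x a))ᴴ *
      (Matrix.of fun (_ : Fin 1) (a : Fin d) => star (icv d x a)) := by
    ext a b
    simp [Matrix.mul_apply, Matrix.conjTranspose_apply, icR]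
  rw [this]
  exact Matrix.posSemidef_conjTranspose_mul_self _

lemma icR_diag (d : ℕ) (a : Fin d) : icR d (a, a, 0) = Matrix.single a a 1 := by
  ext x y
  simp [icR, icv, icc, Matrix.single_apply_same, Matrix.single, apply_ite (star : ℂ → ℂ)]
  split_ifs <;> first | rfl | omega

lemma icR_offdiag (d : ℕ) (a b : Fin d) (hab : a ≠ b) :
    Matrix.single a b 1 =
      (1/2 : ℂ) • icR d (a, b, 1) + (Complex.I/2) • icR d (a, b, 2)
        - ((1 + Complex.I)/2) • icR d (a, a, 0) - ((1 + Complex.I)/2) • icR d (b, b, 0) := by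
  ext x y
  simp only [Matrix.sub_apply, Matrix.add_apply, Matrix.smul_apply, icR, Matrix.of_apply,
    icv, icc, Matrix.single, Matrix.cons_val_zero, Matrix.cons_val_one,
    Matrix.head_cons, Matrix.cons_val_two, Matrix.tail_cons, smul_eq_mul,
    star_add, star_mul', star_one, star_zero, Complex.star_def,
    Complex.conj_I, map_zero, _root_.map_one, apply_ite (starRingEnd ℂ)]
  have hba : ¬ b = a := fun h => hab h.symm
  by_cases hx : x = a <;> by_cases hy : y = b <;> by_cases hxb : x = b <;>
    by_cases hya : y = a <;> simp_all <;>
    first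
    | omega
    | (ring_nf; try norm_num [Complex.I_sq])

lemma psd_smul_real {n : Type} [Fintype n] {A : Matrix n n ℂ} (hA : A.PosSemidef)
    {c : ℝ} (hc : 0 ≤ c) : ((c : ℂ) • A).PosSemidef := by
  exact hA.smul (Complex.zero_le_real.mpr hc)

noncomputable def icM (d : ℕ) (x : Fin d × Fin d × Fin 4) : Matrix (Fin d) (Fin d) ℂ :=
  (((7*(d:ℝ))⁻¹ : ℝ) : ℂ) • icR d x

lemma icM_psd (d : ℕ) (x : Fin d × Fin d × Fin 4) : (icM d x).PosSemidef := by
  unfold icM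
  exact psd_smul_real (icR_posSemidef d x) (by positivity)

lemma icv_hlp (d : ℕ) (c : ℂ) (a b : Fin d) :
    ∑ i : Fin d, ∑ j : Fin d, (((if a = i then 1 else 0) + c * (if a = j then 1 else 0)) *
      ((if b = i then 1 else 0) + star c * (if b = j then 1 else 0)))
    = (if a = b then (d : ℂ) * (1 + c * star c) else 0) + c + star c := by
  simp only [add_mul, mul_add, Finset.sum_add_distrib]
  simp only [mul_ite, ite_mul, mul_one, mul_zero, one_mul, zero_mul,
    Finset.sum_ite_eq, Finset.mem_univ, if_true, Finset.sum_const,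
    Finset.card_univ, Fintype.card_fin, nsmul_eq_mul, mul_comm]
  have pull : ∀ (p : Prop) [Decidable p] (f : Fin d → ℂ),
      (∑ x : Fin d, if p then f x else 0) = if p then ∑ x, f x else 0 := by
    intro p _ f; split_ifs <;> simp
  split_ifs with h1 <;>
    simp [pull, Finset.sum_ite_eq, h1, Finset.sum_const, Finset.card_univ] <;> ring

lemma icv_sum (d : ℕ) (a b : Fin d) :
    ∑ x : Fin d × Fin d × Fin 4, icv d x a * star (icv d x b)
      = if a = b then (7*d : ℂ) else 0 := by
  have step : ∑ x : Fin d × Fin d × Fin 4, icv d x a * star (icv d x b)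
      = ∑ t : Fin 4, ∑ i : Fin d, ∑ j : Fin d, icv d (i,j,t) a * star (icv d (i,j,t) b) := by
    rw [Fintype.sum_prod_type]
    have h1 : ∀ i : Fin d, (∑ y : Fin d × Fin 4, icv d (i, y) a * star (icv d (i, y) b))
        = ∑ t : Fin 4, ∑ j : Fin d, icv d (i,j,t) a * star (icv d (i,j,t) b) := by
      intro i; rw [Fintype.sum_prod_type]; exact Finset.sum_comm
    simp_rw [h1]
    exact Finset.sum_comm
  rw [step]
  have key : ∀ t : Fin 4, ∑ i : Fin d, ∑ j : Fin d, icv d (i,j,t) a * star (icv d (i,j,t) b)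
      = (if a = b then (d : ℂ) * (1 + icc t * star (icc t)) else 0) + icc t + star (icc t) := by
    intro t
    have := icv_hlp d (icc t) a b
    simp only [icv]
    rw [← this]
    refine Finset.sum_congr rfl fun i _ => Finset.sum_congr rfl fun j _ => ?_
    congr 1
    simp [star_add, star_mul', apply_ite (star : ℂ → ℂ)]
  simp only [Fin.sum_univ_four, key]
  have c0 : icc 0 = 0 := rfl
  have c1 : icc 1 = 1 := rfl
  have c2 : icc 2 = Complex.I := rfl
  have c3 : icc 3 = -1 := rfl
  rw [c0, c1, c2, c3]
  simp only [star_zero, star_one, Complex.star_def, Complex.conj_I, map_neg, _root_.map_one]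
  split_ifs with h <;> ring_nf <;> simp [Complex.I_mul_I] <;> ring

lemma icM_sum (d : ℕ) (hd : 1 ≤ d) : ∑ x : Fin d × Fin d × Fin 4, icM d x = 1 := by
  have hd0 : (7*(d:ℝ)) ≠ 0 := by positivity
  ext a b
  rw [Matrix.sum_apply]
  simp only [icM, Matrix.smul_apply, smul_eq_mul]
  rw [← Finset.mul_sum]
  have : ∑ x : Fin d × Fin d × Fin 4, icR d x a b = if a = b then (7*d : ℂ) else 0 := by
    simp only [icR, Matrix.of_apply]
    exact icv_sum d a b
  rw [this, Matrix.one_apply]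
  split_ifs with h
  · push_cast
    field_simp
  · simp

lemma icM_span (d : ℕ) (hd : 1 ≤ d) : Submodule.span ℂ (Set.range (icM d)) = ⊤ := by
  have hd0 : (7*(d:ℝ)) ≠ 0 := by positivity
  have hR : ∀ x, icR d x ∈ Submodule.span ℂ (Set.range (icM d)) := by
    intro x
    have : icR d x = ((7*(d:ℝ) : ℝ) : ℂ) • icM d x := by
      rw [icM, smul_smul]
      rw [show (((7*(d:ℝ)) : ℝ) : ℂ) * (((7*(d:ℝ))⁻¹ : ℝ) : ℂ) = 1 by
        rw [← Complex.ofReal_mul, mul_inv_cancel₀ hd0, Complex.ofReal_one]]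
      rw [one_smul]
    rw [this]
    exact Submodule.smul_mem _ _ (Submodule.subset_span ⟨x, rfl⟩)
  have hstd : ∀ a b : Fin d, Matrix.single a b (1:ℂ) ∈
      Submodule.span ℂ (Set.range (icM d)) := by
    intro a b
    by_cases hab : a = b
    · subst hab
      rw [← icR_diag]
      exact hR _
    · rw [icR_offdiag d a b hab]
      exact Submodule.sub_mem _ (Submodule.sub_mem _
        (Submodule.add_mem _ (Submodule.smul_mem _ _ (hR _)) (Submodule.smul_mem _ _ (hR _)))
        (Submodule.smul_mem _ _ (hR _))) (Submodule.smul_mem _ _ (hR _))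
  rw [eq_top_iff]
  intro X _
  rw [Matrix.matrix_eq_sum_single X]
  refine Submodule.sum_mem _ fun i _ => Submodule.sum_mem _ fun j _ => ?_
  have : Matrix.single i j (X i j) = X i j • Matrix.single i j (1:ℂ) := by
    rw [Matrix.smul_single, smul_eq_mul, mul_one]
  rw [this]
  exact Submodule.smul_mem _ _ (hstd i j)


lemma trace_mul_kron' {m n : Type} [Fintype m] [Fintype n]
    (σ : Matrix (m × n) (m × n) ℂ) (A : Matrix m m ℂ) (B : Matrix n n ℂ) :
    (σ * (A ⊗ₖ B)).trace = ∑ j, ∑ l, (∑ i, ∑ k, σ (i,j) (k,l) * A k i) * B l j := by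
  rw [trace_mul_kron]
  calc ∑ i, ∑ j, ∑ k, ∑ l, σ (i,j) (k,l) * A k i * B l j
      = ∑ j, ∑ i, ∑ k, ∑ l, σ (i,j) (k,l) * A k i * B l j := Finset.sum_comm
    _ = ∑ j, ∑ i, ∑ l, ∑ k, σ (i,j) (k,l) * A k i * B l j :=
        Finset.sum_congr rfl fun j _ => Finset.sum_congr rfl fun i _ => Finset.sum_comm
    _ = ∑ j, ∑ l, ∑ i, ∑ k, σ (i,j) (k,l) * A k i * B l j :=
        Finset.sum_congr rfl fun j _ => Finset.sum_comm
    _ = ∑ j, ∑ l, (∑ i, ∑ k, σ (i,j) (k,l) * A k i) * B l j := by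
        refine Finset.sum_congr rfl fun j _ => Finset.sum_congr rfl fun l _ => ?_
        rw [Finset.sum_mul]
        exact Finset.sum_congr rfl fun i _ => (Finset.sum_mul _ _ _).symm

lemma trace_mul_herm_real {n : Type} [Fintype n] {U V : Matrix n n ℂ}
    (hU : U.IsHermitian) (hV : V.IsHermitian) :
    (U * V).trace = ((U * V).trace.re : ℂ) := by
  have h : (starRingEnd ℂ) ((U * V).trace) = (U * V).trace := by
    rw [← Complex.star_def, ← Matrix.trace_conjTranspose, conjTranspose_mul, hU.eq, hV.eq,
      Matrix.trace_mul_comm]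
  exact (Complex.conj_eq_iff_re.1 h).symm

lemma cleaner_imp_all {d : ℕ} {E : Type} [Fintype E] {P Q : E → Matrix (Fin d) (Fin d) ℂ}
    (hC : Cleaner P Q) (F : Type) [Fintype F] (M : F → Matrix (Fin d) (Fin d) ℂ)
    (hM : IsPOVM M) :
    Rng (fun ef : E × F => Q ef.1 ⊗ₖ M ef.2) ⊆ Rng (fun ef : E × F => P ef.1 ⊗ₖ M ef.2) := by
  obtain ⟨n, A, hA1, hA2⟩ := hC
  rintro p ⟨ρ, hψ, htr, hp⟩
  have key : ∀ (k : Fin n) (X Y : Matrix (Fin d) (Fin d) ℂ),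
      ((A k ⊗ₖ (1 : Matrix (Fin d) (Fin d) ℂ)) * ρ * (A k ⊗ₖ 1)ᴴ * (X ⊗ₖ Y)).trace
        = (ρ * (((A k)ᴴ * X * A k) ⊗ₖ Y)).trace := by
    intro k X Y
    rw [kron_conjT, conjTranspose_one]
    rw [mul_assoc, Matrix.trace_mul_comm, ← mul_assoc, Matrix.trace_mul_comm,
      ← mul_kronecker_mul, ← mul_kronecker_mul, one_mul, mul_one]
  refine ⟨∑ k, (A k ⊗ₖ (1 : Matrix (Fin d) (Fin d) ℂ)) * ρ * (A k ⊗ₖ 1)ᴴ, ?_, ?_, ?_⟩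
  · exact Finset.sum_induction _ _ (fun a b ha hb => ha.add hb) Matrix.PosSemidef.zero
      (fun k _ => hψ.mul_mul_conjTranspose_same _)
  · have h1 : (∑ k, (A k ⊗ₖ (1 : Matrix (Fin d) (Fin d) ℂ)) * ρ * (A k ⊗ₖ 1)ᴴ).trace
        = ∑ k, (ρ * (((A k)ᴴ * A k) ⊗ₖ (1 : Matrix (Fin d) (Fin d) ℂ))).trace := by
      rw [Matrix.trace_sum]
      refine Finset.sum_congr rfl fun k _ => ?_
      have h2 := key k 1 1
      rw [one_kronecker_one, mul_one, mul_one] at h2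
      exact h2
    rw [h1, ← Matrix.trace_sum, ← Finset.mul_sum, ← sum_kron_right, hA1, one_kronecker_one,
      mul_one, htr]
  · rintro ⟨e, f⟩
    have h3 : ((∑ k, (A k ⊗ₖ (1 : Matrix (Fin d) (Fin d) ℂ)) * ρ * (A k ⊗ₖ 1)ᴴ) *
        (P e ⊗ₖ M f)).trace = ∑ k, (ρ * (((A k)ᴴ * P e * A k) ⊗ₖ M f)).trace := by
      rw [Finset.sum_mul, Matrix.trace_sum]
      exact Finset.sum_congr rfl fun k _ => key k (P e) (M f)
    rw [h3, ← Matrix.trace_sum, ← Finset.mul_sum, ← sum_kron_right, hA2 e]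
    exact hp (e, f)

lemma sum_shuffle3 {d : ℕ} (f : (Fin d × Fin d) → Fin d → Fin d → ℂ) :
    ∑ m : Fin d × Fin d, ∑ i, ∑ k, f m i k = ∑ i, ∑ k, ∑ m : Fin d × Fin d, f m i k := by
  calc ∑ m : Fin d × Fin d, ∑ i, ∑ k, f m i k
      = ∑ i, ∑ m : Fin d × Fin d, ∑ k, f m i k := Finset.sum_comm
    _ = ∑ i, ∑ k, ∑ m : Fin d × Fin d, f m i k :=
        Finset.sum_congr rfl fun i _ => Finset.sum_comm

lemma exists_imp_cleaner {d : ℕ} (hd : 1 ≤ d) {E : Type} [Fintype E]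
    {P Q : E → Matrix (Fin d) (Fin d) ℂ} (hP : IsPOVM P) (hQ : IsPOVM Q)
    {F : Type} [Fintype F] {M : F → Matrix (Fin d) (Fin d) ℂ} (hM : IsPOVM M)
    (hIC : InfoComplete M)
    (hsub : Rng (fun ef : E × F => Q ef.1 ⊗ₖ M ef.2) ⊆
      Rng (fun ef : E × F => P ef.1 ⊗ₖ M ef.2)) : Cleaner P Q := by
  have hd0 : (d : ℂ) ≠ 0 := by
    simp only [ne_eq, Nat.cast_eq_zero]; omega
  -- the normalized maximally entangled state
  set C : Matrix (Fin 1) (Fin d × Fin d) ℂ :=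
    Matrix.of fun _ a => (if a.1 = a.2 then 1 else 0) / ((Real.sqrt d : ℝ) : ℂ) with hC
  set ρ₀ : Matrix (Fin d × Fin d) (Fin d × Fin d) ℂ := Cᴴ * C with hρ₀
  have hsq : ((Real.sqrt d : ℝ) : ℂ) * ((Real.sqrt d : ℝ) : ℂ) = (d : ℂ) := by
    rw [← Complex.ofReal_mul, Real.mul_self_sqrt (Nat.cast_nonneg d)]
    simp
  have hρ₀app : ∀ a b : Fin d × Fin d,
      ρ₀ a b = (d : ℂ)⁻¹ * ((if a.1 = a.2 then 1 else 0) * (if b.1 = b.2 then 1 else 0)) := by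
    intro a b
    simp only [hρ₀, hC, Matrix.mul_apply, Matrix.conjTranspose_apply, Matrix.of_apply,
      Fin.sum_univ_one]
    rw [star_div₀]
    have h1 : star ((if a.1 = a.2 then (1:ℂ) else 0)) = (if a.1 = a.2 then (1:ℂ) else 0) := by
      split_ifs <;> simp
    have h2 : star (((Real.sqrt d : ℝ) : ℂ)) = ((Real.sqrt d : ℝ) : ℂ) := by
      rw [Complex.star_def, Complex.conj_ofReal]
    rw [h1, h2, div_mul_div_comm, hsq, div_eq_inv_mul]
  have hρ₀psd : ρ₀.PosSemidef := Matrix.posSemidef_conjTranspose_mul_self _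
  have hρ₀tr : ρ₀.trace = 1 := by
    have htr0 : ρ₀.trace = ∑ a : Fin d × Fin d, ρ₀ a a := rfl
    rw [htr0, Fintype.sum_prod_type]
    simp only [hρ₀app]
    have hij : ∀ i j : Fin d, (d:ℂ)⁻¹ * ((if (i,j).1 = (i,j).2 then (1:ℂ) else 0) *
        (if (i,j).1 = (i,j).2 then (1:ℂ) else 0)) = if i = j then (d:ℂ)⁻¹ else 0 := by
      intro i j; split_ifs <;> simp
    simp_rw [hij]
    simp only [Finset.sum_ite_eq, Finset.mem_univ, if_true, Finset.sum_const,
      Finset.card_univ, Fintype.card_fin, nsmul_eq_mul]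
    exact mul_inv_cancel₀ hd0
  -- trace formula against ρ₀
  have hρ₀kron : ∀ (X Y : Matrix (Fin d) (Fin d) ℂ),
      (ρ₀ * (X ⊗ₖ Y)).trace = (d : ℂ)⁻¹ * ∑ k, ∑ i, X k i * Y k i := by
    intro X Y
    rw [trace_mul_kron]
    simp only [hρ₀app]
    have pull : ∀ (p : Prop) [Decidable p] (f : Fin d → ℂ),
        (∑ x : Fin d, if p then f x else 0) = if p then ∑ x, f x else 0 := by
      intro p _ f; split_ifs <;> simp
    have h1 : ∀ i j k l : Fin d, ((d:ℂ)⁻¹ * ((if ((i,j) : Fin d × Fin d).1 = (i,j).2 then (1:ℂ)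
        else 0) * (if ((k,l) : Fin d × Fin d).1 = (k,l).2 then (1:ℂ) else 0))) * X k i * Y l j
        = if i = j then (if k = l then (d:ℂ)⁻¹ * (X k i * Y l j) else 0) else 0 := by
      intro i j k l
      by_cases h : i = j <;> by_cases h' : k = l <;>
        first
        | (simp [h, h']; try ring)
        | simp [h, h']
    simp_rw [h1, pull, Finset.sum_ite_eq, Finset.mem_univ, if_true]
    rw [Finset.sum_comm, Finset.mul_sum]
    refine Finset.sum_congr rfl fun k _ => ?_
    rw [Finset.mul_sum]
  -- realness of traces
  have hkronHerm : ∀ (e : E) (f : F), ((Q e) ⊗ₖ (M f)).IsHermitian := by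
    intro e f
    unfold Matrix.IsHermitian
    rw [kron_conjT, (hQ.1 e).1.eq, (hM.1 f).1.eq]
  set p : E × F → ℝ := fun ef => ((ρ₀ * (Q ef.1 ⊗ₖ M ef.2)).trace).re with hpdef
  have hpmem : p ∈ Rng (fun ef : E × F => Q ef.1 ⊗ₖ M ef.2) := by
    refine ⟨ρ₀, hρ₀psd, hρ₀tr, fun ef => ?_⟩
    exact (trace_mul_herm_real hρ₀psd.1 (hkronHerm ef.1 ef.2)).symm ▸
      (trace_mul_herm_real hρ₀psd.1 (hkronHerm ef.1 ef.2)).symm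
  obtain ⟨σ, hσpsd, hσtr, hσp⟩ := hsub hpmem
  have hσeq : ∀ (e : E) (f : F),
      (σ * (P e ⊗ₖ M f)).trace = (ρ₀ * (Q e ⊗ₖ M f)).trace := by
    intro e f
    rw [hσp (e, f)]
    exact (trace_mul_herm_real hρ₀psd.1 (hkronHerm e f)).symm
  -- the partial operators agree
  have key : ∀ (e : E) (j l : Fin d),
      (∑ i, ∑ k, σ (i,j) (k,l) * P e k i) = (d:ℂ)⁻¹ * Q e l j := by
    intro e
    have hX : ∀ f : F, ((Matrix.of fun j l =>
        (∑ i, ∑ k, σ (i,j) (k,l) * P e k i) - (d:ℂ)⁻¹ * Q e l j :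
        Matrix (Fin d) (Fin d) ℂ) * M f).trace = 0 := by
      intro f
      have expand : ((Matrix.of fun j l =>
          (∑ i, ∑ k, σ (i,j) (k,l) * P e k i) - (d:ℂ)⁻¹ * Q e l j :
          Matrix (Fin d) (Fin d) ℂ) * M f).trace
          = (∑ j, ∑ l, (∑ i, ∑ k, σ (i,j) (k,l) * P e k i) * M f l j)
            - ∑ j, ∑ l, ((d:ℂ)⁻¹ * Q e l j) * M f l j := by
        simp only [Matrix.trace, Matrix.diag, Matrix.mul_apply, Matrix.of_apply, sub_mul]
        rw [← Finset.sum_sub_distrib]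
        exact Finset.sum_congr rfl fun j _ => Finset.sum_sub_distrib _ _
      rw [expand, ← trace_mul_kron' σ (P e) (M f), hσeq e f, hρ₀kron]
      rw [sub_eq_zero]
      rw [Finset.mul_sum]
      rw [Finset.sum_comm]
      refine Finset.sum_congr rfl fun l _ => ?_
      rw [Finset.mul_sum]
      exact Finset.sum_congr rfl fun j _ => by ring
    have hzero := infoComplete_inj M hIC _ hX
    intro j l
    have h4 := congrFun (congrFun hzero j) l
    simp only [Matrix.of_apply, Matrix.zero_apply] at h4
    exact sub_eq_zero.1 h4
  -- Kraus decomposition from σ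
  obtain ⟨B, hB⟩ : ∃ B : Matrix (Fin d × Fin d) (Fin d × Fin d) ℂ, σ = Bᴴ * B := by
    open scoped MatrixOrder Matrix.Norms.L2Operator in
    exact CStarAlgebra.nonneg_iff_eq_star_mul_self.mp hσpsd.nonneg
  set A : Fin (d*d) → Matrix (Fin d) (Fin d) ℂ := fun k => Matrix.of fun i j =>
    ((Real.sqrt d : ℝ) : ℂ) * star (B (finProdFinEquiv.symm k) (i, j)) with hA
  have σexp : ∀ (i k x y : Fin d), σ (i, y) (k, x)
      = ∑ m : Fin d × Fin d, star (B m (i,y)) * B m (k,x) := by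
    intro i k x y
    rw [hB]
    simp [Matrix.mul_apply, Matrix.conjTranspose_apply]
  have main : ∀ e, ∑ k, (A k)ᴴ * P e * A k = Q e := by
    intro e
    ext x y
    rw [Matrix.sum_apply]
    rw [show (∑ k : Fin (d*d), ((A k)ᴴ * P e * A k) x y)
        = ∑ m : Fin d × Fin d,
          ((A (finProdFinEquiv m))ᴴ * P e * A (finProdFinEquiv m)) x y from
      (Equiv.sum_comp finProdFinEquiv (fun k => ((A k)ᴴ * P e * A k) x y)).symm]
    have entry : ∀ m : Fin d × Fin d,
        ((A (finProdFinEquiv m))ᴴ * P e * A (finProdFinEquiv m)) x y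
        = ∑ i, ∑ k, (d:ℂ) * (B m (k, x) * star (B m (i, y)) * P e k i) := by
      intro m
      simp only [Matrix.mul_apply, Matrix.conjTranspose_apply, hA, Matrix.of_apply,
        Equiv.symm_apply_apply]
      rw [show (∑ j2, (∑ k2, star (((Real.sqrt d : ℝ) : ℂ) * star (B m (k2, x))) * P e k2 j2) *
          (((Real.sqrt d : ℝ) : ℂ) * star (B m (j2, y))))
          = ∑ j2, ∑ k2, (star (((Real.sqrt d : ℝ) : ℂ) * star (B m (k2, x))) * P e k2 j2) *
            (((Real.sqrt d : ℝ) : ℂ) * star (B m (j2, y))) from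
        Finset.sum_congr rfl fun j2 _ => Finset.sum_mul _ _ _]
      refine Finset.sum_congr rfl fun i _ => Finset.sum_congr rfl fun k _ => ?_
      rw [star_mul', star_star, show star (((Real.sqrt d : ℝ) : ℂ)) = ((Real.sqrt d : ℝ) : ℂ) by
          rw [Complex.star_def, Complex.conj_ofReal]]
      linear_combination (B m (k, x) * star (B m (i, y)) * P e k i) * hsq
    have inner : ∀ i k : Fin d,
        (∑ m : Fin d × Fin d, (d:ℂ) * (B m (k,x) * star (B m (i,y)) * P e k i))
        = (d:ℂ) * (σ (i,y) (k,x) * P e k i) := by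
      intro i k
      rw [σexp i k x y, Finset.sum_mul, Finset.mul_sum]
      exact Finset.sum_congr rfl fun m _ => by ring
    simp_rw [entry]
    rw [sum_shuffle3]
    simp_rw [inner]
    rw [show (∑ i, ∑ k, (d:ℂ) * (σ (i,y) (k,x) * P e k i))
        = (d:ℂ) * ∑ i, ∑ k, σ (i,y) (k,x) * P e k i from by
      rw [Finset.mul_sum]
      exact Finset.sum_congr rfl fun i _ => by rw [Finset.mul_sum]]
    rw [key e y x, ← mul_assoc, mul_inv_cancel₀ hd0, one_mul]
  refine ⟨d*d, A, ?_, main⟩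
  have h1 : ∑ k, (A k)ᴴ * A k = ∑ k, (A k)ᴴ * (∑ e, P e) * A k := by
    rw [hP.2]
    simp_rw [Matrix.mul_one]
  rw [h1]
  have h2 : ∀ k : Fin (d*d), (A k)ᴴ * (∑ e, P e) * A k = ∑ e, (A k)ᴴ * P e * A k := by
    intro k
    rw [Finset.mul_sum, Finset.sum_mul]
  simp_rw [h2]
  rw [Finset.sum_comm, show (∑ e, ∑ k, (A k)ᴴ * P e * A k) = ∑ e, Q e from
    Finset.sum_congr rfl fun e _ => main e, hQ.2]


end Aux

/-- `P ≻ Q` iff `Rng(Q ⊗ M) ⊆ Rng(P ⊗ M)` for some informationally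
complete POVM `M`, iff the same range inclusion holds for every POVM `M`. -/
theorem clean_povm_stmt5 (d : ℕ) (hd : 1 ≤ d) (E : Type) [Fintype E]
    (P Q : E → Matrix (Fin d) (Fin d) ℂ) (hP : IsPOVM P) (hQ : IsPOVM Q) :
    (Cleaner P Q ↔
      ∃ (F : Type) (_ : Fintype F) (M : F → Matrix (Fin d) (Fin d) ℂ),
        IsPOVM M ∧ InfoComplete M ∧
        Rng (fun ef : E × F => Q ef.1 ⊗ₖ M ef.2) ⊆
          Rng (fun ef : E × F => P ef.1 ⊗ₖ M ef.2)) ∧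
    (Cleaner P Q ↔
      ∀ (F : Type) (_ : Fintype F) (M : F → Matrix (Fin d) (Fin d) ℂ), IsPOVM M →
        Rng (fun ef : E × F => Q ef.1 ⊗ₖ M ef.2) ⊆
          Rng (fun ef : E × F => P ef.1 ⊗ₖ M ef.2)) := by
  have hMpovm : IsPOVM (icM d) := ⟨fun x => icM_psd d x, icM_sum d hd⟩
  have hMic : InfoComplete (icM d) := icM_span d hd
  constructor
  · constructor
    · intro hC
      exact ⟨Fin d × Fin d × Fin 4, inferInstance, icM d, hMpovm, hMic,
        cleaner_imp_all hC _ (icM d) hMpovm⟩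
    · rintro ⟨F, hF, M, hM, hIC, hsub⟩
      letI := hF
      exact exists_imp_cleaner hd hP hQ hM hIC hsub
  · constructor
    · intro hC F hF M hM
      letI := hF
      exact cleaner_imp_all hC F M hM
    · intro hall
      exact exists_imp_cleaner hd hP hQ hMpovm hMic
        (hall (Fin d × Fin d × Fin 4) inferInstance (icM d) hMpovm)
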